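/- arXiv:2601.12023 — 2 statements merged into one kernel-verified Lean document; each statement's English description precedes it below -/
import Mathlib

section
/- Let θ, θ' and two independent i.i.d. arrays {θ_{1i}}_{i=1}^{N/2}, {θ_{2j}}_{j=1}^{N/2} (N even, N ≥ 4) share a common law on a measurable space Θ, and let h : Θ × Θ → ℝ be measurable and symmetric (h(a,b) = h(b,a)) with E[h(θ,θ')²] < ∞. Define ζ₁ = Var(E[h(θ,θ') | θ]) and ζ₂ = Var(h(θ,θ')). Then the two-batch (vanilla) estimator ĝ = (1/(N/2)²) Σ_{i=1}^{N/2} Σ_{j=1}^{N/2} h(θ_{1i}, θ_{2j}) satisfies Var(ĝ) = (4(N−2)/N²)·ζ₁ + (4/N²)·ζ₂. -/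
/-!
Expand the variance of the double sum into the covariances of the summands
`h(θ₁ᵢ, θ₂ⱼ)` and `h(θ₁ₖ, θ₂ₗ)`. Summands with disjoint index pairs are independent, hence
uncorrelated; if both indices agree the covariance is `ζ₂`; if exactly one agrees, say `i = k`,
then by Fubini the integral over the two unshared coordinates factorises, leaving
`∫ (g(a) - E g)² dρ(a) = ζ₁` with `g(a) = ∫ h(a, b) dρ(b)` (symmetry of `h` reduces `j = l` to
this case). Counting `m²` pairs of the second kind and `2m²(m - 1)` of the third gives
`Var ĝ = (ζ₂ + 2(m - 1) ζ₁) / m²` with `m = N / 2`.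
-/

open MeasureTheory ProbabilityTheory Function

theorem covariance_comp_fst_eq_variance_integral {Θ : Type*} [MeasurableSpace Θ]
    {ρ : Measure Θ} [IsProbabilityMeasure ρ] {f : Θ → Θ → ℝ}
    (hf : MemLp (uncurry f) 2 (ρ.prod ρ)) :
    cov[fun q : Θ × Θ × Θ ↦ f q.1 q.2.1, fun q ↦ f q.1 q.2.2; ρ.prod (ρ.prod ρ)]
      = Var[fun a ↦ ∫ b, f a b ∂ρ; ρ] := by
  have hmp₁ : MeasurePreserving (fun q : Θ × Θ × Θ ↦ (q.1, q.2.1))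
      (ρ.prod (ρ.prod ρ)) (ρ.prod ρ) := (MeasurePreserving.id ρ).prod measurePreserving_fst
  have hmp₂ : MeasurePreserving (fun q : Θ × Θ × Θ ↦ (q.1, q.2.2))
      (ρ.prod (ρ.prod ρ)) (ρ.prod ρ) := (MeasurePreserving.id ρ).prod measurePreserving_snd
  have hint : Integrable (uncurry f) (ρ.prod ρ) := hf.integrable one_le_two
  set M := ∫ p, uncurry f p ∂(ρ.prod ρ)
  have hmean₁ : ∫ q, f q.1 q.2.1 ∂(ρ.prod (ρ.prod ρ)) = M :=
    hmp₁.hasLaw.integral_comp hf.aestronglyMeasurable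
  have hmean₂ : ∫ q, f q.1 q.2.2 ∂(ρ.prod (ρ.prod ρ)) = M :=
    hmp₂.hasLaw.integral_comp hf.aestronglyMeasurable
  have hmean : ∫ a, ∫ b, f a b ∂ρ ∂ρ = M := (integral_prod _ hint).symm
  have hprod : Integrable (fun q : Θ × Θ × Θ ↦ (f q.1 q.2.1 - M) * (f q.1 q.2.2 - M))
      (ρ.prod (ρ.prod ρ)) :=
    ((hf.comp_measurePreserving hmp₁).sub (memLp_const M)).integrable_mul
      ((hf.comp_measurePreserving hmp₂).sub (memLp_const M))
  have hmeas : AEMeasurable (fun a ↦ ∫ b, f a b ∂ρ) ρ :=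
    hf.aestronglyMeasurable.integral_prod_right'.aemeasurable
  rw [covariance, hmean₁, hmean₂, variance_eq_integral hmeas, hmean, integral_prod _ hprod]
  refine integral_congr_ae ?_
  filter_upwards [hint.prod_right_ae] with a ha
  rw [integral_prod_mul (fun b ↦ f a b - M) (fun c ↦ f a c - M),
    integral_sub (f := fun b ↦ f a b) ha (integrable_const M), sq]
  simp

namespace ProbabilityTheory.iIndepFun

variable {ι Ω Θ : Type*} [MeasurableSpace Ω] [MeasurableSpace Θ] {P : Measure Ω}
  [IsProbabilityMeasure P] {ρ : Measure Θ} {F : ι → Ω → Θ} {s t u v : ι}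

theorem hasLaw_prodMk (hindep : iIndepFun F P) (hF : ∀ s, HasLaw (F s) ρ P) (hst : s ≠ t) :
    HasLaw (fun ω ↦ (F s ω, F t ω)) (ρ.prod ρ) P :=
  (indepFun_iff_hasLaw_prodMk_prod (hF s) (hF t)).1 (hindep.indepFun hst)

theorem hasLaw_prodMk_prodMk (hindep : iIndepFun F P) (hF : ∀ s, HasLaw (F s) ρ P)
    (hst : s ≠ t) (hsu : s ≠ u) (htu : t ≠ u) :
    HasLaw (fun ω ↦ (F s ω, (F t ω, F u ω))) (ρ.prod (ρ.prod ρ)) P :=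
  (indepFun_iff_hasLaw_prodMk_prod (hF s) (hindep.hasLaw_prodMk hF htu)).1
    (hindep.indepFun_prodMk₀ (fun i ↦ (hF i).aemeasurable) t u s hst.symm hsu.symm).symm

variable {f : Θ → Θ → ℝ}

theorem memLp_comp (hindep : iIndepFun F P) (hF : ∀ s, HasLaw (F s) ρ P)
    (hf : MemLp (uncurry f) 2 (ρ.prod ρ)) (hst : s ≠ t) :
    MemLp (fun ω ↦ f (F s ω) (F t ω)) 2 P := by
  have hlaw := hindep.hasLaw_prodMk hF hst
  exact (hlaw.map_eq ▸ hf).comp_of_map hlaw.aemeasurable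

theorem covariance_comp_self (hindep : iIndepFun F P) (hF : ∀ s, HasLaw (F s) ρ P)
    (hf : AEMeasurable (uncurry f) (ρ.prod ρ)) (hst : s ≠ t) :
    cov[fun ω ↦ f (F s ω) (F t ω), fun ω ↦ f (F s ω) (F t ω); P]
      = Var[uncurry f; ρ.prod ρ] :=
  ((hindep.hasLaw_prodMk hF hst).covariance_fun_comp hf hf).trans (covariance_self hf)

theorem covariance_comp_of_eq_fst [IsProbabilityMeasure ρ] (hindep : iIndepFun F P)
    (hF : ∀ s, HasLaw (F s) ρ P) (hf : MemLp (uncurry f) 2 (ρ.prod ρ))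
    (hst : s ≠ t) (hsu : s ≠ u) (htu : t ≠ u) :
    cov[fun ω ↦ f (F s ω) (F t ω), fun ω ↦ f (F s ω) (F u ω); P]
      = Var[fun a ↦ ∫ b, f a b ∂ρ; ρ] := by
  have hmeas₁ : AEMeasurable (fun q : Θ × Θ × Θ ↦ f q.1 q.2.1) (ρ.prod (ρ.prod ρ)) :=
    (hf.comp_measurePreserving ((MeasurePreserving.id ρ).prod measurePreserving_fst)).aemeasurable
  have hmeas₂ : AEMeasurable (fun q : Θ × Θ × Θ ↦ f q.1 q.2.2) (ρ.prod (ρ.prod ρ)) :=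
    (hf.comp_measurePreserving ((MeasurePreserving.id ρ).prod measurePreserving_snd)).aemeasurable
  rw [← covariance_comp_fst_eq_variance_integral hf]
  exact (hindep.hasLaw_prodMk_prodMk hF hst hsu htu).covariance_fun_comp hmeas₁ hmeas₂

theorem covariance_comp_eq_zero (hindep : iIndepFun F P) (hF : ∀ s, HasLaw (F s) ρ P)
    (hf : MemLp (uncurry f) 2 (ρ.prod ρ)) (hst : s ≠ t) (huv : u ≠ v)
    (hsu : s ≠ u) (hsv : s ≠ v) (htu : t ≠ u) (htv : t ≠ v) :
    cov[fun ω ↦ f (F s ω) (F t ω), fun ω ↦ f (F u ω) (F v ω); P] = 0 := by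
  have hst' := hindep.hasLaw_prodMk hF hst
  have huv' := hindep.hasLaw_prodMk hF huv
  have hindep' : (fun ω ↦ (F s ω, F t ω)) ⟂ᵢ[P] (fun ω ↦ (F u ω, F v ω)) :=
    hindep.indepFun_prodMk_prodMk₀ (fun i ↦ (hF i).aemeasurable) s t u v hsu hsv htu htv
  refine IndepFun.covariance_eq_zero ?_ (hindep.memLp_comp hF hf hst)
    (hindep.memLp_comp hF hf huv)
  exact hindep'.comp₀ hst'.aemeasurable huv'.aemeasurable
    (hst'.map_eq ▸ hf.aemeasurable) (huv'.map_eq ▸ hf.aemeasurable)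

end ProbabilityTheory.iIndepFun

section TwoSample

variable {α β Ω Θ : Type*} [MeasurableSpace Ω] [MeasurableSpace Θ] {P : Measure Ω}
  [IsProbabilityMeasure P] {ρ : Measure Θ} [IsProbabilityMeasure ρ]
  {θ₁ : α → Ω → Θ} {θ₂ : β → Ω → Θ} {f : Θ → Θ → ℝ}

theorem covariance_two_sample [DecidableEq α] [DecidableEq β]
    (hindep : iIndepFun (Sum.elim θ₁ θ₂) P) (hθ : ∀ s, HasLaw (Sum.elim θ₁ θ₂ s) ρ P)
    (hf : MemLp (uncurry f) 2 (ρ.prod ρ)) (hsymm : ∀ a b, f a b = f b a)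
    (i k : α) (j l : β) :
    cov[fun ω ↦ f (θ₁ i ω) (θ₂ j ω), fun ω ↦ f (θ₁ k ω) (θ₂ l ω); P]
      = if i = k then (if j = l then Var[uncurry f; ρ.prod ρ] else Var[fun a ↦ ∫ b, f a b ∂ρ; ρ])
        else (if j = l then Var[fun a ↦ ∫ b, f a b ∂ρ; ρ] else 0) := by
  have hne : ∀ {i : α} {j : β}, (Sum.inl i : α ⊕ β) ≠ Sum.inr j := Sum.inl_ne_inr
  split_ifs with hik hjl hjl
  · subst hik hjl
    exact hindep.covariance_comp_self hθ hf.aemeasurable hne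
  · subst hik
    exact hindep.covariance_comp_of_eq_fst hθ hf hne hne (by simpa using hjl)
  · subst hjl
    simp_rw [hsymm _ (θ₂ j _)]
    exact hindep.covariance_comp_of_eq_fst hθ hf hne.symm hne.symm (by simpa using hik)
  · exact hindep.covariance_comp_eq_zero hθ hf hne hne (by simpa using hik) hne hne.symm
      (by simpa using hjl)

end TwoSample

theorem sum_sum_ite_prod {α β : Type*} [Fintype α] [Fintype β] [DecidableEq α] [DecidableEq β]
    (a b : ℝ) :
    ∑ p : α × β, ∑ q : α × β,
        (if p.1 = q.1 then (if p.2 = q.2 then a else b) else (if p.2 = q.2 then b else 0))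
      = Fintype.card α * Fintype.card β
          * (a + (Fintype.card α + Fintype.card β - 2) * b) := by
  have hsplit : ∀ p q : α × β,
      (if p.1 = q.1 then (if p.2 = q.2 then a else b) else (if p.2 = q.2 then b else 0))
        = (if p = q then a - 2 * b else 0) + (if p.1 = q.1 then b else 0)
          + (if p.2 = q.2 then b else 0) := by
    intro p q
    by_cases h₁ : p.1 = q.1 <;> by_cases h₂ : p.2 = q.2 <;> simp [Prod.ext_iff, h₁, h₂]
    ring
  have hfst : ∀ p : α × β, ∑ q : α × β, (if p.1 = q.1 then b else 0) = Fintype.card β * b := by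
    intro p
    rw [Fintype.sum_prod_type' (fun x (_ : β) ↦ if p.1 = x then b else 0)]
    simp [mul_comm]
  have hsnd : ∀ p : α × β, ∑ q : α × β, (if p.2 = q.2 then b else 0) = Fintype.card α * b := by
    intro p
    rw [Fintype.sum_prod_type' (fun (_ : α) y ↦ if p.2 = y then b else 0)]
    simp [mul_comm]
  simp only [hsplit, Finset.sum_add_distrib, Finset.sum_ite_eq, Finset.mem_univ, if_true, hfst,
    hsnd, Finset.sum_const, Finset.card_univ, Fintype.card_prod, nsmul_eq_mul, Nat.cast_mul]
  ring

theorem stmt_6_general {Ω Θ : Type*} [MeasurableSpace Ω] [mΘ : MeasurableSpace Θ]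
    (P : Measure Ω) [IsProbabilityMeasure P] (ρ : Measure Θ) [IsProbabilityMeasure ρ]
    (N m : ℕ) (hNm : N = 2 * m)
    (θ₁ θ₂ : Fin m → Ω → Θ)
    (hθ₁_meas : ∀ i, Measurable (θ₁ i)) (hθ₂_meas : ∀ i, Measurable (θ₂ i))
    (hlaw₁ : ∀ i, Measure.map (θ₁ i) P = ρ) (hlaw₂ : ∀ i, Measure.map (θ₂ i) P = ρ)
    (hindep : iIndepFun (Sum.elim θ₁ θ₂) P)
    (h : Θ → Θ → ℝ) (hh_meas : Measurable (Function.uncurry h))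
    (hsymm : ∀ a b, h a b = h b a)
    (hsq : Integrable (fun p : Θ × Θ => (h p.1 p.2) ^ 2) (ρ.prod ρ)) :
    variance (fun ω => (1 / (m : ℝ) ^ 2) *
        ∑ i : Fin m, ∑ j : Fin m, h (θ₁ i ω) (θ₂ j ω)) P
      = (4 * ((N : ℝ) - 2) / (N : ℝ) ^ 2) * variance (fun a => ∫ b, h a b ∂ρ) ρ
        + (4 / (N : ℝ) ^ 2) * variance (Function.uncurry h) (ρ.prod ρ) := by
  have hθ : ∀ s, HasLaw (Sum.elim θ₁ θ₂ s) ρ P := by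
    rintro (i | j)
    exacts [⟨(hθ₁_meas i).aemeasurable, hlaw₁ i⟩, ⟨(hθ₂_meas j).aemeasurable, hlaw₂ j⟩]
  have hh : MemLp (uncurry h) 2 (ρ.prod ρ) :=
    (memLp_two_iff_integrable_sq hh_meas.aestronglyMeasurable).2 hsq
  have hterm : ∀ p : Fin m × Fin m, MemLp (fun ω ↦ h (θ₁ p.1 ω) (θ₂ p.2 ω)) 2 P :=
    fun p ↦ hindep.memLp_comp hθ hh Sum.inl_ne_inr
  simp_rw [← Fintype.sum_prod_type']
  rw [variance_const_mul, variance_fun_sum hterm]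
  simp_rw [covariance_two_sample hindep hθ hh hsymm, sum_sum_ite_prod]
  subst hNm
  rcases Nat.eq_zero_or_pos m with rfl | hm
  · simp
  · simp only [Fintype.card_fin]
    field_simp
    push_cast
    ring

/-- Variance of the two-batch (vanilla) estimator: with total budget `N = 2m` (`N ≥ 4`),
two independent i.i.d. batches of size `m = N/2` with common law `ρ`, and a symmetric
square-integrable kernel `h`, the estimator `(1/m²) Σᵢⱼ h(θ₁ᵢ, θ₂ⱼ)` has variance
`(4(N−2)/N²)·ζ₁ + (4/N²)·ζ₂`, where `ζ₁ = Var(E[h(θ,θ')|θ])` and `ζ₂ = Var(h(θ,θ'))`. -/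
theorem stmt_6 {Ω Θ : Type*} [MeasurableSpace Ω] [mΘ : MeasurableSpace Θ]
    (P : Measure Ω) [IsProbabilityMeasure P] (ρ : Measure Θ) [IsProbabilityMeasure ρ]
    (N m : ℕ) (hNm : N = 2 * m) (hm : 2 ≤ m)
    (θ₁ θ₂ : Fin m → Ω → Θ)
    (hθ₁_meas : ∀ i, Measurable (θ₁ i)) (hθ₂_meas : ∀ i, Measurable (θ₂ i))
    (hlaw₁ : ∀ i, Measure.map (θ₁ i) P = ρ) (hlaw₂ : ∀ i, Measure.map (θ₂ i) P = ρ)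
    (hindep : iIndepFun (Sum.elim θ₁ θ₂) P)
    (h : Θ → Θ → ℝ) (hh_meas : Measurable (Function.uncurry h))
    (hsymm : ∀ a b, h a b = h b a)
    (hsq : Integrable (fun p : Θ × Θ => (h p.1 p.2) ^ 2) (ρ.prod ρ)) :
    variance (fun ω => (1 / (m : ℝ) ^ 2) *
        ∑ i : Fin m, ∑ j : Fin m, h (θ₁ i ω) (θ₂ j ω)) P
      = (4 * ((N : ℝ) - 2) / (N : ℝ) ^ 2) * variance (fun a => ∫ b, h a b ∂ρ) ρ
        + (4 / (N : ℝ) ^ 2) * variance (Function.uncurry h) (ρ.prod ρ) :=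
  stmt_6_general (mΘ := mΘ) P ρ N m hNm θ₁ θ₂ hθ₁_meas hθ₂_meas hlaw₁ hlaw₂ hindep h hh_meas hsymm
    hsq
end

section
/- Let θ, θ' be i.i.d. random elements of a measurable space Θ and h : Θ × Θ → ℝ measurable and symmetric with E[h(θ,θ')²] < ∞; set ζ₁ = Var(E[h(θ,θ') | θ]) and ζ₂ = Var(h(θ,θ')). For an even integer N ≥ 4, let V_vanilla(N) = (4(N−2)/N²)ζ₁ + (4/N²)ζ₂ be the variance of the two-batch estimator built from two independent i.i.d. batches of size N/2, and let V_ustat(N) = (4(N−2)/(N(N−1)))ζ₁ + (2/(N(N−1)))ζ₂ be the variance of the U-statistic estimator built from one i.i.d. batch of size N. Then V_ustat(N) − V_vanilla(N) = (2(N−2)/(N²(N−1)))·(2ζ₁ − ζ₂). In particular, neither estimator's variance is uniformly smaller: the sign of the difference is the sign of 2ζ₁ − ζ₂. -/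
open MeasureTheory ProbabilityTheory

/-!
Both variances are linear in `(ζ₁, ζ₂)`, and subtracting the coefficients gives
`2(n-2)/(n²(n-1))` times `(2, -1)`; for `n > 2` this factor is positive, so it does not
change the sign.
-/

lemma Real.sign_mul_of_pos {c : ℝ} (hc : 0 < c) (x : ℝ) : Real.sign (c * x) = Real.sign x := by
  rcases lt_trichotomy x 0 with hx | rfl | hx
  · rw [Real.sign_of_neg hx, Real.sign_of_neg (mul_neg_of_pos_of_neg hc hx)]
  · rw [mul_zero]
  · rw [Real.sign_of_pos hx, Real.sign_of_pos (mul_pos hc hx)]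

lemma ustat_sub_vanilla_eq {n : ℝ} (hn : n ≠ 0) (hn₁ : n - 1 ≠ 0) (a b : ℝ) :
    ((4 * (n - 2) / (n * (n - 1))) * a + (2 / (n * (n - 1))) * b)
      - ((4 * (n - 2) / n ^ 2) * a + (4 / n ^ 2) * b)
      = (2 * (n - 2) / (n ^ 2 * (n - 1))) * (2 * a - b) := by
  field_simp
  ring

lemma ustat_sub_vanilla_factor_pos {n : ℝ} (hn : 2 < n) :
    0 < 2 * (n - 2) / (n ^ 2 * (n - 1)) := by
  have : 0 < n - 1 := by linarith
  positivity

theorem stmt_8_general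
    (N : ℕ) (hN : 4 ≤ N)
    (ζ₁ ζ₂ Vvanilla Vustat : ℝ)
    (hVvan : Vvanilla = (4 * ((N : ℝ) - 2) / (N : ℝ) ^ 2) * ζ₁ + (4 / (N : ℝ) ^ 2) * ζ₂)
    (hVust : Vustat = (4 * ((N : ℝ) - 2) / ((N : ℝ) * ((N : ℝ) - 1))) * ζ₁
      + (2 / ((N : ℝ) * ((N : ℝ) - 1))) * ζ₂) :
    Vustat - Vvanilla
      = (2 * ((N : ℝ) - 2) / ((N : ℝ) ^ 2 * ((N : ℝ) - 1))) * (2 * ζ₁ - ζ₂) ∧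
    Real.sign (Vustat - Vvanilla) = Real.sign (2 * ζ₁ - ζ₂) := by
  have hN₄ : (4 : ℝ) ≤ N := by exact_mod_cast hN
  have hdiff := ustat_sub_vanilla_eq (n := N) (by linarith) (by linarith) ζ₁ ζ₂
  rw [← hVvan, ← hVust] at hdiff
  rw [hdiff, Real.sign_mul_of_pos (ustat_sub_vanilla_factor_pos (by linarith))]
  exact ⟨rfl, rfl⟩

/-- Comparison of estimator variances: with `ζ₁ = Var(E[h(θ,θ')|θ])`,
`ζ₂ = Var(h(θ,θ'))` for a symmetric square-integrable kernel `h` of i.i.d. variables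
with common law `ρ`, and even `N ≥ 4`, the difference between the U-statistic variance
`V_ustat(N) = (4(N−2)/(N(N−1)))ζ₁ + (2/(N(N−1)))ζ₂` and the two-batch variance
`V_vanilla(N) = (4(N−2)/N²)ζ₁ + (4/N²)ζ₂` equals `(2(N−2)/(N²(N−1)))(2ζ₁ − ζ₂)`;
in particular its sign is the sign of `2ζ₁ − ζ₂`. -/
theorem stmt_8 {Θ : Type*} [MeasurableSpace Θ] (ρ : Measure Θ) [IsProbabilityMeasure ρ]
    (h : Θ → Θ → ℝ) (hh_meas : Measurable (Function.uncurry h))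
    (hsymm : ∀ a b, h a b = h b a)
    (hsq : Integrable (fun p : Θ × Θ => (h p.1 p.2) ^ 2) (ρ.prod ρ))
    (N : ℕ) (hNeven : Even N) (hN : 4 ≤ N)
    (ζ₁ ζ₂ Vvanilla Vustat : ℝ)
    (hζ₁ : ζ₁ = variance (fun a => ∫ b, h a b ∂ρ) ρ)
    (hζ₂ : ζ₂ = variance (Function.uncurry h) (ρ.prod ρ))
    (hVvan : Vvanilla = (4 * ((N : ℝ) - 2) / (N : ℝ) ^ 2) * ζ₁ + (4 / (N : ℝ) ^ 2) * ζ₂)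
    (hVust : Vustat = (4 * ((N : ℝ) - 2) / ((N : ℝ) * ((N : ℝ) - 1))) * ζ₁
      + (2 / ((N : ℝ) * ((N : ℝ) - 1))) * ζ₂) :
    Vustat - Vvanilla
      = (2 * ((N : ℝ) - 2) / ((N : ℝ) ^ 2 * ((N : ℝ) - 1))) * (2 * ζ₁ - ζ₂) ∧
    Real.sign (Vustat - Vvanilla) = Real.sign (2 * ζ₁ - ζ₂) :=
  stmt_8_general N hN ζ₁ ζ₂ Vvanilla Vustat hVvan hVust
end
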